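/- Let μ be an infinite cardinal and X a Hausdorff (T2) μ-sequential topological space. Then for every nonempty set A ⊆ X, the cardinality of the closure of A is at most (#A)^μ. -/

import Mathlib

/-!
Close `A` off under limits of transfinite families of length of cardinality at most `μ`,
iterating `μ⁺` times. Since `μ⁺` is regular, every such family in the union of the stages
already lies in one stage, so the union is closed under these limits and hence, by
`μ`-sequentiality, closed. Limits are unique in a Hausdorff space, so a set of size at most
`κ = #A ^ μ` has at most `μ⁺ · κ ^ μ = κ` such limits, and every stage has size at most `κ`.
-/

open Cardinal Set Filter Topology

universe u

/-- A space is `μ`-sequential if for every non-closed set `A` there are a limit ordinal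
`η` of cardinality at most `μ`, a transfinite family of points of `A` indexed by the
ordinals below `η`, and a point `p ∉ A` to which this family converges, i.e. every
neighborhood of `p` contains a final segment of the family. -/
def MuSequential (μ : Cardinal.{u}) (X : Type u) [TopologicalSpace X] : Prop :=
  ∀ A : Set X, ¬ IsClosed A →
    ∃ (η : Ordinal.{u}), Order.IsSuccLimit η ∧ η.card ≤ μ ∧
      ∃ (x : Set.Iio η → X) (p : X), p ∉ A ∧ (∀ α, x α ∈ A) ∧
        ∀ U ∈ 𝓝 p, ∃ β : Set.Iio η, ∀ α : Set.Iio η,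
          (β : Ordinal) ≤ (α : Ordinal) → x α ∈ U

variable {X : Type u} [TopologicalSpace X]

lemma eq_of_eventually_mem_nhds [T2Space X] {ι : Type*} [Preorder ι] [IsDirectedOrder ι]
    {x : ι → X} {p q : X}
    (hp : ∀ U ∈ 𝓝 p, ∃ i, ∀ j, i ≤ j → x j ∈ U)
    (hq : ∀ U ∈ 𝓝 q, ∃ i, ∀ j, i ≤ j → x j ∈ U) : p = q := by
  obtain ⟨i, -⟩ := hp univ univ_mem
  have : Nonempty ι := ⟨i⟩
  exact tendsto_nhds_unique (tendsto_atTop'.2 hp) (tendsto_atTop'.2 hq)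

def muLimits (μ : Cardinal.{u}) (S : Set X) : Set X :=
  {p | ∃ η : Ordinal.{u}, η.card ≤ μ ∧ ∃ x : Iio η → X, (∀ α, x α ∈ S) ∧
    ∀ U ∈ 𝓝 p, ∃ β : Iio η, ∀ α : Iio η, (β : Ordinal) ≤ α → x α ∈ U}

lemma muLimits_mono {μ : Cardinal.{u}} {S T : Set X} (h : S ⊆ T) :
    muLimits μ S ⊆ muLimits μ T := by
  rintro p ⟨η, hη, x, hx, hconv⟩
  exact ⟨η, hη, x, fun α => h (hx α), hconv⟩

lemma muLimits_empty (μ : Cardinal.{u}) : muLimits μ (∅ : Set X) = ∅ := by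
  refine eq_empty_of_forall_notMem fun p ⟨η, _, x, hx, hconv⟩ => ?_
  obtain ⟨β, -⟩ := hconv univ univ_mem
  exact hx β

lemma isClosed_of_muLimits_subset {μ : Cardinal.{u}} (hseq : MuSequential μ X) {S : Set X}
    (hS : muLimits μ S ⊆ S) : IsClosed S := by
  by_contra hS'
  obtain ⟨η, -, hη, x, p, hpS, hx, hconv⟩ := hseq S hS'
  exact hpS (hS ⟨η, hη, x, hx, hconv⟩)

lemma mk_sigma_Iio_arrow_le {α : Type u} [Nonempty α] (μ : Cardinal.{u}) :
    #(Σ η : Iio (Order.succ μ).ord, (Iio (η : Ordinal.{u}) → α)) ≤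
      lift.{u + 1} (Order.succ μ * #α ^ μ) := by
  have hfib : ∀ η : Iio (Order.succ μ).ord,
      #(Iio (η : Ordinal.{u}) → α) ≤ lift.{u + 1} (#α ^ μ) := by
    rintro ⟨η, hη⟩
    have hημ : η.card ≤ μ := Order.lt_succ_iff.1 (lt_ord.1 hη)
    rw [mk_arrow, mk_Iio_ordinal, lift_lift, ← lift_power]
    exact lift_le.2 (power_le_power_left (mk_ne_zero α) hημ)
  calc _ = sum fun η : Iio (Order.succ μ).ord => #(Iio (η : Ordinal.{u}) → α) := mk_sigma _
    _ ≤ sum fun _ : Iio (Order.succ μ).ord => lift.{u + 1} (#α ^ μ) := sum_le_sum _ _ hfib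
    _ = lift.{u + 1} (Order.succ μ * #α ^ μ) := by simp [mk_Iio_ordinal]

lemma mk_muLimits_le [T2Space X] (μ : Cardinal.{u}) (S : Set X) :
    #(muLimits μ S) ≤ Order.succ μ * #S ^ μ := by
  rcases S.eq_empty_or_nonempty with rfl | hS
  · simp [muLimits_empty]
  have : Nonempty S := hS.to_subtype
  -- a limit is determined by an ordinal below `μ⁺` and a family in `S` indexed below it
  let W := Σ η : Iio (Order.succ μ).ord, (Iio (η : Ordinal.{u}) → S)
  have hcode : ∀ p : muLimits μ S, ∃ w : W,
      ∀ U ∈ 𝓝 (p : X), ∃ β, ∀ α, β ≤ α → (w.2 α : X) ∈ U := by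
    rintro ⟨p, η, hη, x, hx, hconv⟩
    have hηo : η < (Order.succ μ).ord := lt_ord.2 (hη.trans_lt (Order.lt_succ μ))
    exact ⟨⟨⟨η, hηo⟩, fun α => ⟨x α, hx α⟩⟩, hconv⟩
  choose code hcode using hcode
  have hinj : Function.Injective code := fun p q hpq =>
    Subtype.ext (eq_of_eventually_mem_nhds (hcode p) (hpq ▸ hcode q))
  exact lift_le.1 ((lift_mk_le_lift_mk_of_injective hinj).trans
    (by rw [lift_id'.{u, u + 1}]; exact mk_sigma_Iio_arrow_le (α := S) μ))

noncomputable def muLimitsIter (μ : Cardinal.{u}) (A : Set X) : Ordinal.{u} → Set X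
  | α => A ∪ muLimits μ (⋃ β < α, muLimitsIter μ A β)
  termination_by α => α
  decreasing_by assumption

section muLimitsIter

variable (μ : Cardinal.{u}) (A : Set X)

lemma muLimitsIter_eq (α : Ordinal.{u}) :
    muLimitsIter μ A α = A ∪ muLimits μ (⋃ β < α, muLimitsIter μ A β) := by
  rw [muLimitsIter]

lemma subset_muLimitsIter (α : Ordinal.{u}) : A ⊆ muLimitsIter μ A α := by
  rw [muLimitsIter_eq]
  exact subset_union_left

lemma muLimitsIter_mono : Monotone (muLimitsIter μ A) := by
  intro α α' h
  rw [muLimitsIter_eq, muLimitsIter_eq]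
  exact union_subset_union_right _ <| muLimits_mono <|
    iUnion₂_mono' fun β hβ => ⟨β, hβ.trans_le h, subset_rfl⟩

lemma mk_muLimitsIter_le [T2Space X] {κ : Cardinal.{u}} (hκ : ℵ₀ ≤ κ) (hμκ : Order.succ μ ≤ κ)
    (hκμ : κ ^ μ = κ) (hA : #A ≤ κ) (α : Ordinal.{u}) (hα : α.card ≤ κ) :
    #(muLimitsIter μ A α) ≤ κ := by
  induction α using WellFoundedLT.induction with
  | _ α IH =>
    have hprev : #(⋃ β < α, muLimitsIter μ A β) ≤ κ :=
      mk_biUnion_le_of_le hα hκ _ fun β hβ => IH β hβ ((Ordinal.card_le_card hβ.le).trans hα)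
    rw [muLimitsIter_eq]
    calc #(A ∪ muLimits μ (⋃ β < α, muLimitsIter μ A β) : Set X)
        ≤ #A + Order.succ μ * #(⋃ β < α, muLimitsIter μ A β) ^ μ :=
          (mk_union_le _ _).trans (add_le_add_right (mk_muLimits_le _ _) _)
      _ ≤ κ + κ * κ ^ μ := add_le_add hA (mul_le_mul' hμκ (power_le_power_right hprev))
      _ = κ := by rw [hκμ, mul_eq_self hκ, add_eq_self hκ]

def muLimitsClosure : Set X :=
  ⋃ β < (Order.succ μ).ord, muLimitsIter μ A β

lemma mk_muLimitsClosure_le [T2Space X] {κ : Cardinal.{u}} (hκ : ℵ₀ ≤ κ)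
    (hμκ : Order.succ μ ≤ κ) (hκμ : κ ^ μ = κ) (hA : #A ≤ κ) : #(muLimitsClosure μ A) ≤ κ := by
  have ho : (Order.succ μ).ord.card ≤ κ := by rwa [card_ord]
  exact mk_biUnion_le_of_le ho hκ _ fun β hβ =>
    mk_muLimitsIter_le μ A hκ hμκ hκμ hA β ((Ordinal.card_le_card hβ.le).trans ho)

lemma muLimits_muLimitsClosure_subset (hμ : ℵ₀ ≤ μ) :
    muLimits μ (muLimitsClosure μ A) ⊆ muLimitsClosure μ A := by
  rintro p ⟨η, hη, x, hx, hconv⟩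
  choose g hgo hxg using fun α => mem_iUnion₂.1 (hx α)
  -- `μ⁺` is regular, so the `≤ μ` stages containing the family are bounded below `μ⁺`
  have hsup : ⨆ α, g α < (Order.succ μ).ord := by
    refine Ordinal.lift_iSup_lt_of_lt_cof ?_ hgo
    rw [← Ordinal.lift_cof, (isRegular_succ hμ).cof_ord, mk_Iio_ordinal, lift_lift, lift_lt]
    exact hη.trans_lt (Order.lt_succ μ)
  have hbdd : BddAbove (range g) := ⟨_, forall_mem_range.2 fun α => (hgo α).le⟩
  refine mem_iUnion₂.2 ⟨_, (isSuccLimit_ord (hμ.trans (Order.le_succ μ))).succ_lt hsup, ?_⟩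
  rw [muLimitsIter_eq]
  refine Or.inr ⟨η, hη, x, fun α => mem_iUnion₂.2 ⟨_, Order.lt_succ _, ?_⟩, hconv⟩
  exact muLimitsIter_mono μ A (le_ciSup hbdd α) (hxg α)

lemma closure_subset_muLimitsClosure (hμ : ℵ₀ ≤ μ) (hseq : MuSequential μ X) :
    closure A ⊆ muLimitsClosure μ A := by
  have hμ0 : (0 : Ordinal) < (Order.succ μ).ord := by
    rw [lt_ord, Ordinal.card_zero]
    exact (aleph0_pos.trans_le hμ).trans_le (Order.le_succ μ)
  exact closure_minimal ((subset_muLimitsIter μ A 0).trans (subset_biUnion_of_mem hμ0))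
    (isClosed_of_muLimits_subset hseq (muLimits_muLimitsClosure_subset μ A hμ))

end muLimitsIter

theorem muSequential_closure_card_le
    {X : Type u} [TopologicalSpace X] [T2Space X] (μ : Cardinal.{u})
    (hμ : ℵ₀ ≤ μ) (hseq : MuSequential μ X) :
    ∀ A : Set X, A.Nonempty → #(closure A) ≤ #A ^ μ := by
  intro A hA
  obtain ⟨a, rfl⟩ | hA := hA.exists_eq_singleton_or_nontrivial
  · simp
  set κ := #A ^ μ
  have hμκ : Order.succ μ ≤ κ :=
    Order.succ_le_of_lt (cantor' μ (one_lt_iff_nontrivial.2 hA.coe_sort))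
  have hκ : ℵ₀ ≤ κ := hμ.trans ((Order.le_succ μ).trans hμκ)
  have hκμ : κ ^ μ = κ := by rw [← power_mul, mul_eq_self hμ]
  have hAκ : #A ≤ κ := self_le_power _ (one_le_aleph0.trans hμ)
  exact (mk_le_mk_of_subset (closure_subset_muLimitsClosure μ A hμ hseq)).trans
    (mk_muLimitsClosure_le μ A hκ hμκ hκμ hAκ)
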